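/- arXiv:1404.3146 — 2 statements merged into one kernel-verified Lean document; each statement's English description precedes it below -/
import Mathlib

section
/- CoI(X;Y;Z) = \widetilde{SI}(X:Y;Z) - \widetilde{CI}(X:Y;Z), where the coinformation is computed with respect to the true joint distribution P. -/
open scoped BigOperators Classical

noncomputable section

/-- Shannon entropy (in bits) of a distribution on a finite type. -/
def ent {A : Type*} [Fintype A] (q : A → ℝ) : ℝ :=
  -∑ a, q a * Real.logb 2 (q a)

def ent2 {A B : Type*} [Fintype A] [Fintype B] (q : A → B → ℝ) : ℝ :=
  ent (fun p : A × B => q p.1 p.2)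

def ent3 {A B C : Type*} [Fintype A] [Fintype B] [Fintype C] (q : A → B → C → ℝ) : ℝ :=
  ent (fun p : A × B × C => q p.1 p.2.1 p.2.2)

/-- Mutual information MI(A:B) (in bits) of a joint distribution `q`. -/
def MI {A B : Type*} [Fintype A] [Fintype B] (q : A → B → ℝ) : ℝ :=
  ent (fun a => ∑ b, q a b) + ent (fun b => ∑ a, q a b) - ent2 q

/-- Conditional mutual information MI(A:B|C) of a joint distribution `q` of (A,B,C):
`MI(A:B|C) = H(A,C) + H(B,C) - H(C) - H(A,B,C)`. -/
def CMI {A B C : Type*} [Fintype A] [Fintype B] [Fintype C] (q : A → B → C → ℝ) : ℝ :=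
  ent2 (fun a c => ∑ b, q a b c) + ent2 (fun b c => ∑ a, q a b c)
    - ent (fun c => ∑ a, ∑ b, q a b c) - ent3 q

/-- Coinformation CoI(A;B;C) = MI(A:B) - MI(A:B|C). -/
def CoI {A B C : Type*} [Fintype A] [Fintype B] [Fintype C] (q : A → B → C → ℝ) : ℝ :=
  MI (fun a b => ∑ c, q a b c) - CMI q

structure IsDist2 {A B : Type*} [Fintype A] [Fintype B] (q : A → B → ℝ) : Prop where
  nonneg : ∀ a b, 0 ≤ q a b
  sum_one : ∑ a, ∑ b, q a b = 1

structure IsDist3 {A B C : Type*} [Fintype A] [Fintype B] [Fintype C]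
    (q : A → B → C → ℝ) : Prop where
  nonneg : ∀ a b c, 0 ≤ q a b c
  sum_one : ∑ a, ∑ b, ∑ c, q a b c = 1

structure IsDist4 {A B C D : Type*} [Fintype A] [Fintype B] [Fintype C] [Fintype D]
    (q : A → B → C → D → ℝ) : Prop where
  nonneg : ∀ a b c d, 0 ≤ q a b c d
  sum_one : ∑ a, ∑ b, ∑ c, ∑ d, q a b c d = 1

structure IsDist5 {A B C D E : Type*} [Fintype A] [Fintype B] [Fintype C] [Fintype D] [Fintype E]
    (q : A → B → C → D → E → ℝ) : Prop where
  nonneg : ∀ a b c d e, 0 ≤ q a b c d e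
  sum_one : ∑ a, ∑ b, ∑ c, ∑ d, ∑ e, q a b c d e = 1

/-- Δ_P: the joint distributions of (X,Y,Z) having the same (X,Y)- and (X,Z)-marginals as P. -/
def Delta {A B C : Type*} [Fintype A] [Fintype B] [Fintype C] (p : A → B → C → ℝ) :
    Set (A → B → C → ℝ) :=
  {q | IsDist3 q ∧ (∀ a b, ∑ c, q a b c = ∑ c, p a b c)
      ∧ (∀ a c, ∑ b, q a b c = ∑ b, p a b c)}

/-- MI(X:(Y,Z)). -/
def MIpair {A B C : Type*} [Fintype A] [Fintype B] [Fintype C] (q : A → B → C → ℝ) : ℝ :=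
  MI (fun a (p : B × C) => q a p.1 p.2)

/-- The unique information UI~(X : Y \ Z) = min over Δ_P of MI_Q(X:Y|Z). -/
def UI {A B C : Type*} [Fintype A] [Fintype B] [Fintype C] (p : A → B → C → ℝ) : ℝ :=
  sInf (CMI '' Delta p)

/-- The unique information UI~(X : Z \ Y) = min over Δ_P of MI_Q(X:Z|Y). -/
def UIr {A B C : Type*} [Fintype A] [Fintype B] [Fintype C] (p : A → B → C → ℝ) : ℝ :=
  sInf ((fun q => CMI (fun a c b => q a b c)) '' Delta p)

/-- The shared information SI~(X : Y ; Z) = max over Δ_P of CoI_Q(X;Y;Z). -/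
def SI {A B C : Type*} [Fintype A] [Fintype B] [Fintype C] (p : A → B → C → ℝ) : ℝ :=
  sSup (CoI '' Delta p)

/-- The complementary information CI~(X : Y ; Z) = MI_P(X:(Y,Z)) - min over Δ_P of MI_Q(X:(Y,Z)). -/
def CI {A B C : Type*} [Fintype A] [Fintype B] [Fintype C] (p : A → B → C → ℝ) : ℝ :=
  MIpair p - sInf (MIpair '' Delta p)


section Aux

lemma term_bound {x : ℝ} (h0 : 0 ≤ x) (h1 : x ≤ 1) : -2 ≤ x * Real.logb 2 x := by
  rcases h0.eq_or_lt with h|h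
  · simp [← h]
  · have hinv := Real.log_le_sub_one_of_pos (inv_pos.mpr h)
    rw [Real.log_inv] at hinv
    have hxx : x * x⁻¹ = 1 := mul_inv_cancel₀ (ne_of_gt h)
    have h2 : x - 1 ≤ x * Real.log x := by nlinarith
    have hlog2 : (0:ℝ) < Real.log 2 := Real.log_pos one_lt_two
    have h12 : (1:ℝ)/2 ≤ Real.log 2 := by
      have := Real.log_two_gt_d9; linarith
    rw [Real.logb, ← mul_div_assoc, le_div_iff₀ hlog2]
    nlinarith

lemma ent_nonneg {A : Type*} [Fintype A] {q : A → ℝ} (h0 : ∀ a, 0 ≤ q a)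
    (h1 : ∀ a, q a ≤ 1) : 0 ≤ ent q := by
  rw [ent, neg_nonneg]
  apply Finset.sum_nonpos
  intro a _
  exact mul_nonpos_of_nonneg_of_nonpos (h0 a) (Real.logb_nonpos one_lt_two (h0 a) (h1 a))

lemma ent_le {A : Type*} [Fintype A] {q : A → ℝ} (h0 : ∀ a, 0 ≤ q a)
    (h1 : ∀ a, q a ≤ 1) : ent q ≤ 2 * (Fintype.card A : ℝ) := by
  rw [ent]
  have : ∀ a ∈ Finset.univ, -(q a * Real.logb 2 (q a)) ≤ 2 := by
    intro a _
    have := term_bound (h0 a) (h1 a); linarith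
  calc -∑ a, q a * Real.logb 2 (q a) = ∑ a, -(q a * Real.logb 2 (q a)) := by
        rw [Finset.sum_neg_distrib]
    _ ≤ ∑ _a : A, (2:ℝ) := Finset.sum_le_sum this
    _ = 2 * (Fintype.card A : ℝ) := by simp [mul_comm]

lemma vals_le_one {A : Type*} [Fintype A] {f : A → ℝ} (h0 : ∀ a, 0 ≤ f a)
    (hs : ∑ a, f a = 1) : ∀ a, f a ≤ 1 := fun a =>
  hs ▸ Finset.single_le_sum (fun i _ => h0 i) (Finset.mem_univ a)

lemma ent_comp_equiv {A B : Type*} [Fintype A] [Fintype B] (e : A ≃ B) (q : B → ℝ) :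
    ent (fun a => q (e a)) = ent q := by
  rw [ent, ent]
  congr 1
  exact Fintype.sum_equiv e _ _ (fun a => rfl)

lemma chain1 {A B C : Type*} [Fintype A] [Fintype B] [Fintype C] (q : A → B → C → ℝ) :
    MIpair q = MI (fun a c => ∑ b, q a b c) + CMI q := by
  simp only [MIpair, MI, CMI, ent2, ent3]
  have h1 : (fun a => ∑ p : B × C, q a p.1 p.2) = fun a => ∑ c, ∑ b, q a b c := by
    funext a
    rw [Fintype.sum_prod_type]
    exact Finset.sum_comm
  rw [h1]
  ring

lemma chain2 {A B C : Type*} [Fintype A] [Fintype B] [Fintype C] (q : A → B → C → ℝ) :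
    MIpair q = MI (fun a b => ∑ c, q a b c) + CMI (fun a c b => q a b c) := by
  simp only [MIpair, MI, CMI, ent2, ent3]
  have h1 : (fun a => ∑ p : B × C, q a p.1 p.2) = fun a => ∑ b, ∑ c, q a b c := by
    funext a
    rw [Fintype.sum_prod_type]
  have h2 : ent (fun p : B × C => ∑ a, q a p.1 p.2)
      = ent (fun p : C × B => ∑ a, q a p.2 p.1) := by
    rw [← ent_comp_equiv (Equiv.prodComm B C) (fun p : C × B => ∑ a, q a p.2 p.1)]
    rfl
  have h3 : ent (fun p : A × B × C => q p.1 p.2.1 p.2.2)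
      = ent (fun p : A × C × B => q p.1 p.2.2 p.2.1) := by
    rw [← ent_comp_equiv ((Equiv.refl A).prodCongr (Equiv.prodComm B C))
      (fun p : A × C × B => q p.1 p.2.2 p.2.1)]
    rfl
  rw [h1, h2, h3]
  ring

lemma MIpair_bound {A B C : Type*} [Fintype A] [Fintype B] [Fintype C]
    {q : A → B → C → ℝ} (hq : IsDist3 q) :
    -(2 * (Fintype.card (A × B × C) : ℝ)) ≤ MIpair q := by
  simp only [MIpair, MI, ent2]
  have hs3 : ∑ p : A × B × C, q p.1 p.2.1 p.2.2 = 1 := by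
    rw [Fintype.sum_prod_type]
    simp_rw [Fintype.sum_prod_type]
    exact hq.sum_one
  have h30 : ∀ p : A × B × C, 0 ≤ q p.1 p.2.1 p.2.2 := fun p => hq.nonneg _ _ _
  have h31 : ∀ p : A × B × C, q p.1 p.2.1 p.2.2 ≤ 1 := vals_le_one h30 hs3
  have hf10 : ∀ a, 0 ≤ ∑ p : B × C, q a p.1 p.2 := fun a =>
    Finset.sum_nonneg fun p _ => hq.nonneg _ _ _
  have hf1s : ∑ a, ∑ p : B × C, q a p.1 p.2 = 1 := by
    rw [← hs3, Fintype.sum_prod_type]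
  have hf20 : ∀ p : B × C, 0 ≤ ∑ a, q a p.1 p.2 := fun p =>
    Finset.sum_nonneg fun a _ => hq.nonneg _ _ _
  have hf2s : ∑ p : B × C, ∑ a, q a p.1 p.2 = 1 := by
    rw [Finset.sum_comm, ← hs3, Fintype.sum_prod_type]
  have e1 := ent_nonneg hf10 (vals_le_one hf10 hf1s)
  have e2 := ent_nonneg hf20 (vals_le_one hf20 hf2s)
  have e3 := ent_le h30 h31
  linarith

end Aux

/-- `CoI(X;Y;Z) = SI~(X:Y;Z) - CI~(X:Y;Z)`, the coinformation being computed
with respect to the true joint distribution `p`. -/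
theorem CoI_eq_SI_sub_CI {X Y Z : Type*} [Fintype X] [Fintype Y] [Fintype Z]
    (p : X → Y → Z → ℝ) (hp : IsDist3 p) :
    CoI p = SI p - CI p := by
  classical
  set c : ℝ := MI (fun a b => ∑ z, p a b z) + MI (fun a z => ∑ b, p a b z) with hc
  have hCoI : ∀ q ∈ Delta p, CoI q = c - MIpair q := by
    intro q hq
    obtain ⟨hq1, hq2, hq3⟩ := hq
    have e2 : (fun a b => ∑ z, q a b z) = fun a b => ∑ z, p a b z := by
      funext a b; exact hq2 a b
    have e3 : (fun a z => ∑ b, q a b z) = fun a z => ∑ b, p a b z := by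
      funext a z; exact hq3 a z
    have h1 := chain1 q
    rw [e3] at h1
    rw [CoI, e2, hc]
    linarith
  have hpD : p ∈ Delta p := ⟨hp, fun _ _ => rfl, fun _ _ => rfl⟩
  set s := MIpair '' Delta p with hs
  have hsne : s.Nonempty := ⟨MIpair p, p, hpD, rfl⟩
  have hbdd : BddBelow s := by
    refine ⟨-(2 * (Fintype.card (X × Y × Z) : ℝ)), ?_⟩
    rintro _ ⟨q, hq, rfl⟩
    exact MIpair_bound hq.1
  have hglb := isGLB_csInf hsne hbdd
  set m := sInf s with hm
  have himg : CoI '' Delta p = (fun x => c - x) '' s := by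
    ext y; constructor
    · rintro ⟨q, hq, rfl⟩
      exact ⟨MIpair q, ⟨q, hq, rfl⟩, (hCoI q hq).symm⟩
    · rintro ⟨x, ⟨q, hq, rfl⟩, rfl⟩
      exact ⟨q, hq, hCoI q hq⟩
  have hlub : IsLUB ((fun x => c - x) '' s) (c - m) := by
    constructor
    · rintro _ ⟨x, hx, rfl⟩
      have := hglb.1 hx
      simp only
      linarith
    · intro u hu
      have hlb : c - u ∈ lowerBounds s := by
        intro x hx
        have := hu ⟨x, hx, rfl⟩
        simp only at this
        linarith
      have := hglb.2 hlb
      linarith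
  have hSI : SI p = c - m := by
    rw [SI, himg]
    exact hlub.csSup_eq ⟨c - MIpair p, MIpair p, ⟨p, hpD, rfl⟩, rfl⟩
  have hCI : CI p = MIpair p - m := by rw [CI, hm, hs]
  have hself := hCoI p hpD
  rw [hSI, hCI]
  linarith

end
end

section
/- \widetilde{UI}(X:Y\setminus(Z,Z')) \le \widetilde{UI}(X:Y\setminus Z): the unique information of Y with respect to a larger conditioning variable does not increase. -/
open scoped BigOperators Classical

noncomputable section

section Aux

set_option linter.unusedSectionVars false
set_option linter.unusedVariables false

lemma gibbs {ι : Type*} [Fintype ι] (p m : ι → ℝ) (hp : ∀ i, 0 ≤ p i)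
    (hm : ∀ i, 0 ≤ m i) (hac : ∀ i, p i ≠ 0 → m i ≠ 0)
    (hsum : ∑ i, m i ≤ ∑ i, p i) :
    ∑ i, p i * (Real.logb 2 (m i) - Real.logb 2 (p i)) ≤ 0 := by
  have hlog2 : 0 < Real.log 2 := Real.log_pos (by norm_num)
  have key : ∀ i, p i * (Real.logb 2 (m i) - Real.logb 2 (p i)) ≤ (m i - p i) / Real.log 2 := by
    intro i
    rcases eq_or_lt_of_le (hp i) with h0 | hpi
    · rw [← h0]
      simp only [zero_mul, sub_zero]
      exact div_nonneg (hm i) (le_of_lt hlog2)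
    · have hmi : 0 < m i := (hm i).lt_of_ne' (hac i (ne_of_gt hpi))
      have hd : Real.logb 2 (m i) - Real.logb 2 (p i) = Real.log (m i / p i) / Real.log 2 := by
        rw [Real.log_div (ne_of_gt hmi) (ne_of_gt hpi)]
        simp [Real.logb, sub_div]
      rw [hd]
      have hle := Real.log_le_sub_one_of_pos (div_pos hmi hpi)
      calc p i * (Real.log (m i / p i) / Real.log 2)
          ≤ p i * ((m i / p i - 1) / Real.log 2) := by
            apply mul_le_mul_of_nonneg_left _ (le_of_lt hpi)
            exact by gcongr
        _ = (m i - p i) / Real.log 2 := by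
            field_simp
  calc ∑ i, p i * (Real.logb 2 (m i) - Real.logb 2 (p i))
      ≤ ∑ i, (m i - p i) / Real.log 2 := Finset.sum_le_sum (fun i _ => key i)
    _ = (∑ i, m i - ∑ i, p i) / Real.log 2 := by
        rw [← Finset.sum_div, Finset.sum_sub_distrib]
    _ ≤ 0 := div_nonpos_of_nonpos_of_nonneg (by linarith) (le_of_lt hlog2)


variable {A B C : Type*} [Fintype A] [Fintype B] [Fintype C]

lemma ent3_eq (q : A → B → C → ℝ) :
    ent3 q = -∑ a, ∑ b, ∑ c, q a b c * Real.logb 2 (q a b c) := by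
  simp [ent3, ent, Fintype.sum_prod_type]

lemma entC_eq (q : A → B → C → ℝ) :
    ent (fun c => ∑ a, ∑ b, q a b c)
      = -∑ a, ∑ b, ∑ c, q a b c * Real.logb 2 (∑ a', ∑ b', q a' b' c) := by
  rw [ent]
  congr 1
  have h1 : ∀ c : C, (∑ a, ∑ b, q a b c) * Real.logb 2 (∑ a', ∑ b', q a' b' c)
      = ∑ a, ∑ b, q a b c * Real.logb 2 (∑ a', ∑ b', q a' b' c) := by
    intro c
    rw [Finset.sum_mul]
    exact Finset.sum_congr rfl fun a _ => Finset.sum_mul _ _ _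
  simp only [h1]
  rw [Finset.sum_comm]
  exact Finset.sum_congr rfl fun a _ => Finset.sum_comm

lemma entAC_eq (q : A → B → C → ℝ) :
    ent2 (fun a c => ∑ b, q a b c)
      = -∑ a, ∑ b, ∑ c, q a b c * Real.logb 2 (∑ b', q a b' c) := by
  rw [ent2, ent]
  congr 1
  rw [Fintype.sum_prod_type]
  refine Finset.sum_congr rfl fun a _ => ?_
  have h1 : ∀ c : C, (∑ b, q a b c) * Real.logb 2 (∑ b', q a b' c)
      = ∑ b, q a b c * Real.logb 2 (∑ b', q a b' c) := fun c => Finset.sum_mul _ _ _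
  simp only [h1]
  exact Finset.sum_comm

lemma entBC_eq (q : A → B → C → ℝ) :
    ent2 (fun b c => ∑ a, q a b c)
      = -∑ a, ∑ b, ∑ c, q a b c * Real.logb 2 (∑ a', q a' b c) := by
  rw [ent2, ent]
  congr 1
  rw [Fintype.sum_prod_type]
  have h1 : ∀ (b : B) (c : C), (∑ a, q a b c) * Real.logb 2 (∑ a', q a' b c)
      = ∑ a, q a b c * Real.logb 2 (∑ a', q a' b c) := fun b c => Finset.sum_mul _ _ _
  simp only [h1]
  have h2 : ∀ b : B, ∑ c, ∑ a, q a b c * Real.logb 2 (∑ a', q a' b c)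
      = ∑ a, ∑ c, q a b c * Real.logb 2 (∑ a', q a' b c) := fun b => Finset.sum_comm
  simp only [h2]
  exact Finset.sum_comm

lemma CMI_eq (q : A → B → C → ℝ) :
    CMI q = ∑ a, ∑ b, ∑ c, q a b c *
      (Real.logb 2 (q a b c) + Real.logb 2 (∑ a', ∑ b', q a' b' c)
        - Real.logb 2 (∑ b', q a b' c) - Real.logb 2 (∑ a', q a' b c)) := by
  rw [CMI, ent3_eq, entC_eq, entAC_eq, entBC_eq]
  simp only [mul_add, mul_sub, Finset.sum_add_distrib, Finset.sum_sub_distrib]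
  ring

lemma sum_swapC (f : A → B → C → ℝ) : ∑ a, ∑ b, ∑ c, f a b c = ∑ c, ∑ a, ∑ b, f a b c := by
  have h : ∀ a : A, ∑ b, ∑ c, f a b c = ∑ c, ∑ b, f a b c := fun a => Finset.sum_comm
  simp only [h]
  exact Finset.sum_comm

lemma CMI_nonneg (q : A → B → C → ℝ) (h1 : ∀ a b c, 0 ≤ q a b c) : 0 ≤ CMI q := by
  classical
  set m : A × B × C → ℝ := fun i =>
    if (∑ a', ∑ b', q a' b' i.2.2) = 0 then 0
    else (∑ b', q i.1 b' i.2.2) * (∑ a', q a' i.2.1 i.2.2) / (∑ a', ∑ b', q a' b' i.2.2)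
    with hm
  have hmn : ∀ i, 0 ≤ m i := by
    intro i
    rw [hm]
    dsimp only
    split
    · exact le_refl 0
    · exact div_nonneg (mul_nonneg (Finset.sum_nonneg fun b' _ => h1 _ _ _)
        (Finset.sum_nonneg fun a' _ => h1 _ _ _))
        (Finset.sum_nonneg fun a' _ => Finset.sum_nonneg fun b' _ => h1 _ _ _)
  have hpn : ∀ i : A × B × C, 0 ≤ q i.1 i.2.1 i.2.2 := fun i => h1 _ _ _
  have hposs : ∀ i : A × B × C, q i.1 i.2.1 i.2.2 ≠ 0 →
      0 < (∑ b', q i.1 b' i.2.2) ∧ 0 < (∑ a', q a' i.2.1 i.2.2)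
        ∧ 0 < (∑ a', ∑ b', q a' b' i.2.2) := by
    intro i hne
    have hpos : 0 < q i.1 i.2.1 i.2.2 := (hpn i).lt_of_ne' hne
    have hAC : 0 < ∑ b', q i.1 b' i.2.2 :=
      lt_of_lt_of_le hpos (Finset.single_le_sum (f := fun b' => q i.1 b' i.2.2)
        (fun b' _ => h1 _ _ _) (Finset.mem_univ i.2.1))
    have hBC : 0 < ∑ a', q a' i.2.1 i.2.2 :=
      lt_of_lt_of_le hpos (Finset.single_le_sum (f := fun a' => q a' i.2.1 i.2.2)
        (fun a' _ => h1 _ _ _) (Finset.mem_univ i.1))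
    have hC : 0 < ∑ a', ∑ b', q a' b' i.2.2 :=
      lt_of_lt_of_le hAC (Finset.single_le_sum (f := fun a' => ∑ b', q a' b' i.2.2)
        (fun a' _ => Finset.sum_nonneg fun b' _ => h1 _ _ _) (Finset.mem_univ i.1))
    exact ⟨hAC, hBC, hC⟩
  have hac : ∀ i : A × B × C, q i.1 i.2.1 i.2.2 ≠ 0 → m i ≠ 0 := by
    intro i hne
    obtain ⟨hAC, hBC, hC⟩ := hposs i hne
    rw [hm]
    dsimp only
    rw [if_neg (ne_of_gt hC)]
    positivity
  have hsum : ∑ i : A × B × C, m i ≤ ∑ i : A × B × C, q i.1 i.2.1 i.2.2 := by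
    rw [hm]
    simp only [Fintype.sum_prod_type]
    rw [sum_swapC, sum_swapC (fun a b c => q a b c)]
    apply Finset.sum_le_sum
    intro c _
    by_cases hC : (∑ a', ∑ b', q a' b' c) = 0
    · simp [hC]
    · simp only [if_neg hC]
      have e1 : ∑ a, ∑ b, (∑ b', q a b' c) * (∑ a', q a' b c) / (∑ a', ∑ b', q a' b' c)
          = (∑ a, ∑ b', q a b' c) * (∑ b, ∑ a', q a' b c) / (∑ a', ∑ b', q a' b' c) := by
        rw [Finset.sum_mul, Finset.sum_div]
        refine Finset.sum_congr rfl fun a _ => ?_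
        rw [Finset.mul_sum, Finset.sum_div]
      rw [e1]
      have e2 : (∑ b, ∑ a', q a' b c) = ∑ a', ∑ b', q a' b' c := Finset.sum_comm
      rw [e2, mul_div_assoc, div_self hC, mul_one]
  have hg := gibbs (fun i : A × B × C => q i.1 i.2.1 i.2.2) m hpn hmn hac hsum
  rw [CMI_eq]
  have e0 : ∑ i : A × B × C, q i.1 i.2.1 i.2.2 *
        (Real.logb 2 (m i) - Real.logb 2 (q i.1 i.2.1 i.2.2))
      = ∑ a, ∑ b, ∑ c, q a b c * (Real.logb 2 (m (a, b, c)) - Real.logb 2 (q a b c)) := by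
    simp only [Fintype.sum_prod_type]
  have e1 : ∀ a b c, q a b c * (Real.logb 2 (m (a, b, c)) - Real.logb 2 (q a b c))
      = -(q a b c * (Real.logb 2 (q a b c) + Real.logb 2 (∑ a', ∑ b', q a' b' c)
          - Real.logb 2 (∑ b', q a b' c) - Real.logb 2 (∑ a', q a' b c))) := by
    intro a b c
    by_cases hz : q a b c = 0
    · simp [hz]
    · obtain ⟨hAC, hBC, hC⟩ := hposs (a, b, c) hz
      rw [hm]
      dsimp only
      rw [if_neg (ne_of_gt hC)]
      rw [Real.logb_div (by positivity) (ne_of_gt hC),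
        Real.logb_mul (ne_of_gt hAC) (ne_of_gt hBC)]
      ring
  rw [e0] at hg
  simp only [e1, Finset.sum_neg_distrib] at hg
  linarith

lemma swap3 {X Y Z : Type*} [Fintype X] [Fintype Y] [Fintype Z] (f : X → Y → Z → ℝ) :
    ∑ x, ∑ y, ∑ z, f x y z = ∑ y, ∑ z, ∑ x, f x y z :=
  calc ∑ x, ∑ y, ∑ z, f x y z = ∑ y, ∑ x, ∑ z, f x y z := Finset.sum_comm
    _ = ∑ y, ∑ z, ∑ x, f x y z := Finset.sum_congr rfl fun _ _ => Finset.sum_comm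

lemma swap4 {X Y Z Z' : Type*} [Fintype X] [Fintype Y] [Fintype Z] [Fintype Z']
    (f : X → Y → Z → Z' → ℝ) :
    ∑ x, ∑ y, ∑ z, ∑ z', f x y z z' = ∑ y, ∑ z, ∑ z', ∑ x, f x y z z' :=
  calc ∑ x, ∑ y, ∑ z, ∑ z', f x y z z' = ∑ y, ∑ x, ∑ z, ∑ z', f x y z z' := Finset.sum_comm
    _ = ∑ y, ∑ z, ∑ z', ∑ x, f x y z z' :=
      Finset.sum_congr rfl fun y _ => swap3 (fun x z z' => f x y z z')

lemma key {X Y Z Z' : Type*} [Fintype X] [Fintype Y] [Fintype Z] [Fintype Z']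
    (q' : X → Y → Z → Z' → ℝ) (q : X → Y → Z → ℝ)
    (hq' : ∀ x y z z', 0 ≤ q' x y z z')
    (hsum : ∀ x y z, ∑ z', q' x y z z' = q x y z)
    (hprop : ∀ x y z z', q' x y z z' * (∑ y', q x y' z) = q x y z * (∑ y', q' x y' z z')) :
    CMI (fun x y (w : Z × Z') => q' x y w.1 w.2) ≤ CMI q := by
  classical
  simp only [CMI_eq, Fintype.sum_prod_type]
  show ∑ x, ∑ y, ∑ z, ∑ z', q' x y z z' *
      (Real.logb 2 (q' x y z z') + Real.logb 2 (∑ a', ∑ b', q' a' b' z z')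
        - Real.logb 2 (∑ b', q' x b' z z') - Real.logb 2 (∑ a', q' a' y z z'))
    ≤ ∑ x, ∑ y, ∑ z, q x y z *
      (Real.logb 2 (q x y z) + Real.logb 2 (∑ a', ∑ b', q a' b' z)
        - Real.logb 2 (∑ b', q x b' z) - Real.logb 2 (∑ a', q a' y z))
  have hq : ∀ x y z, 0 ≤ q x y z := by
    intro x y z
    rw [← hsum]
    exact Finset.sum_nonneg fun z' _ => hq' x y z z'
  -- marginal identities
  have hBt : ∀ y z, ∑ z', ∑ x, q' x y z z' = ∑ x, q x y z := by
    intro y z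
    rw [Finset.sum_comm]
    exact Finset.sum_congr rfl fun x _ => hsum x y z
  have hC't : ∀ z z', ∑ y, ∑ x, q' x y z z' = ∑ a', ∑ b', q' a' b' z z' :=
    fun z z' => Finset.sum_comm
  have hBC : ∀ z, ∑ y, ∑ x, q x y z = ∑ a', ∑ b', q a' b' z := fun z => Finset.sum_comm
  have hC'C : ∀ z, ∑ z', ∑ a', ∑ b', q' a' b' z z' = ∑ a', ∑ b', q a' b' z := by
    intro z
    rw [← sum_swapC (fun a' b' z' => q' a' b' z z')]
    exact Finset.sum_congr rfl fun a' _ => Finset.sum_congr rfl fun b' _ => hsum a' b' z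
  have hposs2 : ∀ y z z', (∑ x, q' x y z z') ≠ 0 →
      0 < (∑ x, q x y z) ∧ 0 < (∑ a', ∑ b', q' a' b' z z') ∧ 0 < (∑ a', ∑ b', q a' b' z) := by
    intro y z z' hne
    have htpos : 0 < ∑ x, q' x y z z' :=
      (Finset.sum_nonneg fun x _ => hq' x y z z').lt_of_ne' hne
    have hB : 0 < ∑ x, q x y z := by
      refine lt_of_lt_of_le htpos ?_
      rw [← hBt y z]
      exact Finset.single_le_sum (f := fun w => ∑ x, q' x y z w)
        (fun w _ => Finset.sum_nonneg fun x _ => hq' x y z w) (Finset.mem_univ z')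
    have hC' : 0 < ∑ a', ∑ b', q' a' b' z z' := by
      refine lt_of_lt_of_le htpos ?_
      rw [← hC't z z']
      exact Finset.single_le_sum (f := fun y' => ∑ x, q' x y' z z')
        (fun y' _ => Finset.sum_nonneg fun x _ => hq' x y' z z') (Finset.mem_univ y)
    have hC : 0 < ∑ a', ∑ b', q a' b' z := by
      refine lt_of_lt_of_le hB ?_
      rw [← hBC z]
      exact Finset.single_le_sum (f := fun y' => ∑ x, q x y' z)
        (fun y' _ => Finset.sum_nonneg fun x _ => hq x y' z) (Finset.mem_univ y)
    exact ⟨hB, hC', hC⟩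
  -- rewrite RHS as a quadruple sum
  have eR : ∀ x y z, q x y z *
      (Real.logb 2 (q x y z) + Real.logb 2 (∑ a', ∑ b', q a' b' z)
        - Real.logb 2 (∑ b', q x b' z) - Real.logb 2 (∑ a', q a' y z))
      = ∑ z', q' x y z z' *
      (Real.logb 2 (q x y z) + Real.logb 2 (∑ a', ∑ b', q a' b' z)
        - Real.logb 2 (∑ b', q x b' z) - Real.logb 2 (∑ a', q a' y z)) := by
    intro x y z
    rw [← Finset.sum_mul, hsum]
  simp only [eR]
  rw [← sub_nonpos]
  simp only [← Finset.sum_sub_distrib]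
  -- pointwise cancellation
  have e2 : ∀ x y z z', q' x y z z' *
      (Real.logb 2 (q' x y z z') + Real.logb 2 (∑ a', ∑ b', q' a' b' z z')
        - Real.logb 2 (∑ b', q' x b' z z') - Real.logb 2 (∑ a', q' a' y z z'))
      - q' x y z z' *
      (Real.logb 2 (q x y z) + Real.logb 2 (∑ a', ∑ b', q a' b' z)
        - Real.logb 2 (∑ b', q x b' z) - Real.logb 2 (∑ a', q a' y z))
      = q' x y z z' *
      ((Real.logb 2 (∑ a', ∑ b', q' a' b' z z') - Real.logb 2 (∑ a', ∑ b', q a' b' z))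
        - (Real.logb 2 (∑ a', q' a' y z z') - Real.logb 2 (∑ a', q a' y z))) := by
    intro x y z z'
    rcases eq_or_lt_of_le (hq' x y z z') with h0 | hpos
    · rw [← h0]
      ring
    · have hqpos : 0 < q x y z := by
        refine lt_of_lt_of_le hpos ?_
        rw [← hsum]
        exact Finset.single_le_sum (f := fun w => q' x y z w)
          (fun w _ => hq' x y z w) (Finset.mem_univ z')
      have hrpos : 0 < ∑ b', q' x b' z z' :=
        lt_of_lt_of_le hpos (Finset.single_le_sum (f := fun b' => q' x b' z z')
          (fun b' _ => hq' x b' z z') (Finset.mem_univ y))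
      have hspos : 0 < ∑ b', q x b' z :=
        lt_of_lt_of_le hqpos (Finset.single_le_sum (f := fun b' => q x b' z)
          (fun b' _ => hq x b' z) (Finset.mem_univ y))
      have hlog : Real.logb 2 (q' x y z z') + Real.logb 2 (∑ b', q x b' z)
          = Real.logb 2 (q x y z) + Real.logb 2 (∑ b', q' x b' z z') := by
        rw [← Real.logb_mul (ne_of_gt hpos) (ne_of_gt hspos),
          ← Real.logb_mul (ne_of_gt hqpos) (ne_of_gt hrpos), hprop]
      linear_combination (q' x y z z') * hlog
  simp only [e2]
  -- group the x-sum
  rw [swap4]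
  have e3 : ∀ y z z', ∑ x, q' x y z z' *
      ((Real.logb 2 (∑ a', ∑ b', q' a' b' z z') - Real.logb 2 (∑ a', ∑ b', q a' b' z))
        - (Real.logb 2 (∑ a', q' a' y z z') - Real.logb 2 (∑ a', q a' y z)))
      = (∑ x, q' x y z z') *
      ((Real.logb 2 (∑ a', ∑ b', q' a' b' z z') - Real.logb 2 (∑ a', ∑ b', q a' b' z))
        - (Real.logb 2 (∑ a', q' a' y z z') - Real.logb 2 (∑ a', q a' y z))) :=
    fun y z z' => (Finset.sum_mul _ _ _).symm
  simp only [e3]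
  -- apply the Gibbs inequality over Y × Z × Z'
  have h1' : ∀ i : Y × Z × Z', 0 ≤ ∑ x, q' x i.1 i.2.1 i.2.2 :=
    fun i => Finset.sum_nonneg fun x _ => hq' x i.1 i.2.1 i.2.2
  set m : Y × Z × Z' → ℝ := fun i =>
    if (∑ a', ∑ b', q a' b' i.2.1) = 0 then 0
    else (∑ x, q x i.1 i.2.1) * (∑ a', ∑ b', q' a' b' i.2.1 i.2.2) / (∑ a', ∑ b', q a' b' i.2.1)
    with hm
  have h2' : ∀ i, 0 ≤ m i := by
    intro i
    rw [hm]
    dsimp only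
    split
    · exact le_refl 0
    · exact div_nonneg (mul_nonneg (Finset.sum_nonneg fun x _ => hq _ _ _)
        (Finset.sum_nonneg fun a' _ => Finset.sum_nonneg fun b' _ => hq' _ _ _ _))
        (Finset.sum_nonneg fun a' _ => Finset.sum_nonneg fun b' _ => hq _ _ _)
  have h3' : ∀ i : Y × Z × Z', (∑ x, q' x i.1 i.2.1 i.2.2) ≠ 0 → m i ≠ 0 := by
    intro i hne
    obtain ⟨hB, hC', hC⟩ := hposs2 i.1 i.2.1 i.2.2 hne
    rw [hm]
    dsimp only
    rw [if_neg (ne_of_gt hC)]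
    positivity
  have h4' : ∑ i : Y × Z × Z', m i ≤ ∑ i : Y × Z × Z', ∑ x, q' x i.1 i.2.1 i.2.2 := by
    rw [hm]
    simp only [Fintype.sum_prod_type]
    have hRp : ∑ y, ∑ z, ∑ z', ∑ x, q' x y z z' = ∑ z, ∑ a', ∑ b', q a' b' z := by
      simp only [hBt]
      rw [Finset.sum_comm]
      exact Finset.sum_congr rfl fun z _ => hBC z
    rw [hRp, Finset.sum_comm]
    apply Finset.sum_le_sum
    intro z _
    by_cases hC : (∑ a', ∑ b', q a' b' z) = 0
    · simp [hC]
    · simp only [if_neg hC]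
      have e5 : ∑ y, ∑ z', (∑ x, q x y z) * (∑ a', ∑ b', q' a' b' z z')
            / (∑ a', ∑ b', q a' b' z)
          = (∑ y, ∑ x, q x y z) * (∑ z', ∑ a', ∑ b', q' a' b' z z')
            / (∑ a', ∑ b', q a' b' z) := by
        rw [Finset.sum_mul, Finset.sum_div]
        refine Finset.sum_congr rfl fun y _ => ?_
        rw [Finset.mul_sum, Finset.sum_div]
      rw [e5, hBC z, hC'C z, mul_div_assoc, div_self hC, mul_one]
  have hg := gibbs (fun i : Y × Z × Z' => ∑ x, q' x i.1 i.2.1 i.2.2) m h1' h2' h3' h4'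
  have ef : ∑ i : Y × Z × Z', (∑ x, q' x i.1 i.2.1 i.2.2) *
        (Real.logb 2 (m i) - Real.logb 2 (∑ x, q' x i.1 i.2.1 i.2.2))
      = ∑ y, ∑ z, ∑ z', (∑ x, q' x y z z') *
        ((Real.logb 2 (∑ a', ∑ b', q' a' b' z z') - Real.logb 2 (∑ a', ∑ b', q a' b' z))
          - (Real.logb 2 (∑ a', q' a' y z z') - Real.logb 2 (∑ a', q a' y z))) := by
    simp only [Fintype.sum_prod_type]
    refine Finset.sum_congr rfl fun y _ => Finset.sum_congr rfl fun z _ =>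
      Finset.sum_congr rfl fun z' _ => ?_
    by_cases ht : (∑ x, q' x y z z') = 0
    · rw [ht]
      ring
    · obtain ⟨hB, hC', hC⟩ := hposs2 y z z' ht
      rw [hm]
      dsimp only
      rw [if_neg (ne_of_gt hC), Real.logb_div (by positivity) (ne_of_gt hC),
        Real.logb_mul (ne_of_gt hB) (ne_of_gt hC')]
      ring
  rw [ef] at hg
  exact hg

def liftQ {X Y Z Z' : Type*} [Fintype Y] (q : X → Y → Z → ℝ) (r : X → Z → Z' → ℝ)
    (x : X) (y : Y) (z : Z) (z' : Z') : ℝ :=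
  if (∑ y', q x y' z) = 0 then 0 else q x y z * r x z z' / (∑ y', q x y' z)

section liftQ
variable {X Y Z Z' : Type*} [Fintype Y] [Fintype Z'] (q : X → Y → Z → ℝ) (r : X → Z → Z' → ℝ)

lemma liftQ_nonneg (hq : ∀ x y z, 0 ≤ q x y z) (hr : ∀ x z z', 0 ≤ r x z z')
    (x : X) (y : Y) (z : Z) (z' : Z') : 0 ≤ liftQ q r x y z z' := by
  rw [liftQ]
  split
  · exact le_refl 0
  · have hs : 0 ≤ ∑ y', q x y' z := Finset.sum_nonneg fun y' _ => hq x y' z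
    exact div_nonneg (mul_nonneg (hq x y z) (hr x z z')) hs

lemma q_eq_zero_of_s_eq_zero (hq : ∀ x y z, 0 ≤ q x y z) {x : X} {z : Z}
    (h : (∑ y', q x y' z) = 0) (y : Y) : q x y z = 0 := by
  have h1 : q x y z ≤ 0 := by
    rw [← h]
    exact Finset.single_le_sum (f := fun y' => q x y' z) (fun y' _ => hq x y' z)
      (Finset.mem_univ y)
  exact le_antisymm h1 (hq x y z)

lemma sum_z'_liftQ (hq : ∀ x y z, 0 ≤ q x y z)
    (hrs : ∀ x z, ∑ z', r x z z' = ∑ y, q x y z)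
    (x : X) (y : Y) (z : Z) : ∑ z', liftQ q r x y z z' = q x y z := by
  by_cases h : (∑ y', q x y' z) = 0
  · simp only [liftQ, if_pos h, Finset.sum_const_zero]
    exact (q_eq_zero_of_s_eq_zero q hq h y).symm
  · simp only [liftQ, if_neg h]
    rw [← Finset.sum_div, ← Finset.mul_sum, hrs, mul_div_assoc, div_self h, mul_one]

lemma sum_y_liftQ (hq : ∀ x y z, 0 ≤ q x y z) (hr : ∀ x z z', 0 ≤ r x z z')
    (hrs : ∀ x z, ∑ z', r x z z' = ∑ y, q x y z)
    (x : X) (z : Z) (z' : Z') : ∑ y, liftQ q r x y z z' = r x z z' := by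
  by_cases h : (∑ y', q x y' z) = 0
  · have hr0 : r x z z' = 0 := by
      have hs : ∑ z'', r x z z'' = 0 := by rw [hrs]; exact h
      have h1 : r x z z' ≤ 0 := by
        rw [← hs]
        exact Finset.single_le_sum (f := fun w => r x z w) (fun w _ => hr x z w)
          (Finset.mem_univ z')
      exact le_antisymm h1 (hr x z z')
    simp [liftQ, h, hr0]
  · simp only [liftQ, if_neg h]
    rw [← Finset.sum_div, ← Finset.sum_mul, mul_comm (∑ y, q x y z) (r x z z'),
      mul_div_assoc, div_self h, mul_one]

lemma liftQ_prop (hq : ∀ x y z, 0 ≤ q x y z) (hr : ∀ x z z', 0 ≤ r x z z')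
    (hrs : ∀ x z, ∑ z', r x z z' = ∑ y, q x y z)
    (x : X) (y : Y) (z : Z) (z' : Z') :
    liftQ q r x y z z' * (∑ y', q x y' z)
      = q x y z * (∑ y', liftQ q r x y' z z') := by
  rw [sum_y_liftQ q r hq hr hrs]
  by_cases h : (∑ y', q x y' z) = 0
  · rw [q_eq_zero_of_s_eq_zero q hq h y]
    simp [liftQ, h]
  · simp only [liftQ, if_neg h]
    rw [div_mul_cancel₀ _ h]

end liftQ

end Aux

/-- `UI~(X:Y\(Z,Z')) ≤ UI~(X:Y\Z)`: the unique information of Y with respect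
to a larger conditioning variable does not increase.  Here `p'` is the joint distribution of
(X,Y,Z,Z') and the right-hand side is computed from its (X,Y,Z)-marginal. -/
theorem UI_antitone_right {X Y Z Z' : Type*} [Fintype X] [Fintype Y] [Fintype Z] [Fintype Z']
    (p' : X → Y → Z → Z' → ℝ) (hp : IsDist4 p') :
    UI (fun x y (w : Z × Z') => p' x y w.1 w.2) ≤ UI (fun x y z => ∑ z', p' x y z z') := by
  classical
  have hP3 : IsDist3 (fun x y z => ∑ z', p' x y z z') :=
    ⟨fun x y z => Finset.sum_nonneg fun z' _ => hp.nonneg x y z z', hp.sum_one⟩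
  rw [UI, UI]
  apply le_csInf
  · exact ⟨CMI (fun x y z => ∑ z', p' x y z z'),
      Set.mem_image_of_mem _ ⟨hP3, fun a b => rfl, fun a c => rfl⟩⟩
  rintro v ⟨q, ⟨hq3, hxy, hxz⟩, rfl⟩
  have hqn : ∀ x y z, 0 ≤ q x y z := hq3.nonneg
  set r : X → Z → Z' → ℝ := fun x z z' => ∑ y, p' x y z z' with hrdef
  have hrn : ∀ x z z', 0 ≤ r x z z' :=
    fun x z z' => Finset.sum_nonneg fun y _ => hp.nonneg x y z z'
  have hrs : ∀ x z, ∑ z', r x z z' = ∑ y, q x y z := by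
    intro x z
    rw [hxz x z]
    exact Finset.sum_comm
  have hmem : (fun x y (w : Z × Z') => liftQ q r x y w.1 w.2)
      ∈ Delta (fun x y (w : Z × Z') => p' x y w.1 w.2) := by
    refine ⟨⟨fun x y w => liftQ_nonneg q r hqn hrn x y w.1 w.2, ?_⟩, ?_, ?_⟩
    · simp only [Fintype.sum_prod_type]
      have hz : ∀ x y z, ∑ z', liftQ q r x y z z' = q x y z := sum_z'_liftQ q r hqn hrs
      simp only [hz]
      exact hq3.sum_one
    · intro a b
      simp only [Fintype.sum_prod_type]
      have hz : ∀ z, ∑ z', liftQ q r a b z z' = q a b z := sum_z'_liftQ q r hqn hrs a b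
      simp only [hz]
      exact hxy a b
    · intro a c
      exact sum_y_liftQ q r hqn hrn hrs a c.1 c.2
  refine le_trans (csInf_le ?_ (Set.mem_image_of_mem _ hmem)) ?_
  · refine ⟨0, ?_⟩
    rintro w ⟨q2, ⟨hq2, -, -⟩, rfl⟩
    exact CMI_nonneg _ hq2.nonneg
  · exact key (fun x y z z' => liftQ q r x y z z') q
      (liftQ_nonneg q r hqn hrn) (sum_z'_liftQ q r hqn hrs) (liftQ_prop q r hqn hrn hrs)

end
end
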